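/- arXiv:2105.14033 — 3 statements merged into one kernel-verified Lean document; each statement's English description precedes it below -/
import Mathlib

section
/- Suppose the sequences (X^k, y^k, S^k) (k ≥ 1), X^0 ∈ S^n_+, σ_k (k ≥ 0) and ε_k satisfy the iPGM conditions, with ‖y^k‖ ≤ M for all k ≥ 1. Let X* be primal optimal and (y*, S*) dual feasible with ⟨C, X*⟩ = ⟨b, y*⟩ (zero duality gap). Then for every k ≥ 2: ‖A*y^k + S^k − C‖ ≤ (1/√σ_k) · sqrt( (1/(k−1)) ( (1/(2σ_0))‖X^0 − X*‖² + 2M Σ_{i=1}^{k−1} i ε_i ) + ‖y*‖ ε_k + M (ε_{k−1} + ε_k) ). -/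
/-!
Write `θᵢ = ⟨C, Xᵢ⟩ - ⟨C, X*⟩` and `Rᵢ = A*yᵢ + Sᵢ - C`. Since `Sᵢ ⪰ 0` and `⟨Xᵢ, Sᵢ⟩ = 0`, each
iteration satisfies the variational inequality `⟨C, Xᵢ - Z⟩ ≤ ⟨Rᵢ, Z - Xᵢ⟩ + M (εᵢ + ‖A Z - b‖)`
for every `Z ⪰ 0`. Taking `Z = X*` and the three-point identity for `Rᵢ = (Xᵢ - Xᵢ₋₁) / σᵢ` give
`θᵢ ≤ M εᵢ + Dᵢ₋₁ - Dᵢ` with `Dᵢ = ‖Xᵢ - X*‖² / (2σᵢ)`, as `σ` is nondecreasing; taking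
`Z = Xᵢ₋₁` gives `σᵢ ‖Rᵢ‖² + θᵢ ≤ θᵢ₋₁ + M (εᵢ₋₁ + εᵢ)`. Together these make
`i θᵢ + Dᵢ + M i εᵢ` grow by at most `2 M i εᵢ` per step, which bounds `θₖ₋₁`, while weak duality
bounds `θₖ ≥ -‖y*‖ εₖ`.
-/

set_option autoImplicit false

open Matrix Finset Filter
open scoped RealInnerProductSpace

noncomputable section

/-- The trace inner product `⟨X, Y⟩ = trace (Xᵀ * Y)` on real `n × n` matrices. -/
def mInner {n : ℕ} (X Y : Matrix (Fin n) (Fin n) ℝ) : ℝ := (Xᵀ * Y).trace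

/-- The Frobenius norm induced by the trace inner product. -/
def mNorm {n : ℕ} (X : Matrix (Fin n) (Fin n) ℝ) : ℝ := Real.sqrt (mInner X X)

/-- `ℝ^m` with the Euclidean inner product. -/
abbrev Vec (m : ℕ) := EuclideanSpace ℝ (Fin m)

section

variable {n : ℕ}

lemma mInner_comm (X Y : Matrix (Fin n) (Fin n) ℝ) : mInner X Y = mInner Y X := by
  rw [mInner, ← trace_transpose, transpose_mul, transpose_transpose, mInner]

lemma mInner_add_left (X Y Z : Matrix (Fin n) (Fin n) ℝ) :
    mInner (X + Y) Z = mInner X Z + mInner Y Z := by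
  simp only [mInner, transpose_add, Matrix.add_mul, trace_add]

lemma mInner_sub_left (X Y Z : Matrix (Fin n) (Fin n) ℝ) :
    mInner (X - Y) Z = mInner X Z - mInner Y Z := by
  simp only [mInner, transpose_sub, Matrix.sub_mul, trace_sub]

lemma mInner_sub_right (X Y Z : Matrix (Fin n) (Fin n) ℝ) :
    mInner X (Y - Z) = mInner X Y - mInner X Z := by
  simp only [mInner, Matrix.mul_sub, trace_sub]

lemma mInner_smul_left (c : ℝ) (X Y : Matrix (Fin n) (Fin n) ℝ) :
    mInner (c • X) Y = c * mInner X Y := by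
  simp only [mInner, transpose_smul, Matrix.smul_mul, trace_smul, smul_eq_mul]

lemma mInner_smul_right (c : ℝ) (X Y : Matrix (Fin n) (Fin n) ℝ) :
    mInner X (c • Y) = c * mInner X Y := by
  simp only [mInner, Matrix.mul_smul, trace_smul, smul_eq_mul]

lemma mInner_self_nonneg (X : Matrix (Fin n) (Fin n) ℝ) : 0 ≤ mInner X X := by
  simpa [mInner, conjTranspose_eq_transpose_of_trivial] using
    (posSemidef_conjTranspose_mul_self X).trace_nonneg

lemma mNorm_sq (X : Matrix (Fin n) (Fin n) ℝ) : mNorm X ^ 2 = mInner X X :=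
  Real.sq_sqrt (mInner_self_nonneg X)

lemma mInner_three_point (U V W : Matrix (Fin n) (Fin n) ℝ) :
    2 * mInner (U - V) (W - U) = mNorm (V - W) ^ 2 - mNorm (U - W) ^ 2 - mNorm (U - V) ^ 2 := by
  simp only [mNorm_sq, mInner_sub_left, mInner_sub_right, mInner_comm V U, mInner_comm W U,
    mInner_comm W V]
  ring

open scoped MatrixOrder in
lemma Matrix.PosSemidef.mInner_nonneg {X S : Matrix (Fin n) (Fin n) ℝ} (hX : X.PosSemidef)
    (hS : S.PosSemidef) : 0 ≤ mInner X S := by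
  obtain ⟨B, rfl⟩ := CStarAlgebra.nonneg_iff_eq_star_mul_self.mp hS.nonneg
  have hXt : Xᵀ = X := by simpa [conjTranspose_eq_transpose_of_trivial] using hX.isHermitian.eq
  rw [mInner, hXt, star_eq_conjTranspose, ← Matrix.mul_assoc, trace_mul_comm, ← Matrix.mul_assoc]
  exact (hX.mul_mul_conjTranspose_same B).trace_nonneg

lemma real_inner_sub_le_norm_sub_add_norm_sub_mul {E : Type*} [NormedAddCommGroup E]
    [InnerProductSpace ℝ E] (u v b y : E) : ⟪u - v, y⟫ ≤ (‖u - b‖ + ‖v - b‖) * ‖y‖ := by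
  refine (real_inner_le_norm _ _).trans (mul_le_mul_of_nonneg_right ?_ (norm_nonneg y))
  simpa only [norm_sub_rev b v] using norm_sub_le_norm_sub_add_norm_sub u b v

lemma le_one_div_sqrt_mul_sqrt {σ r B : ℝ} (hσ : 0 < σ) (h : σ * r ^ 2 ≤ B) :
    r ≤ 1 / √σ * √B := by
  rw [one_div, ← Real.sqrt_inv, ← Real.sqrt_mul (inv_nonneg.2 hσ.le)]
  exact Real.le_sqrt_of_sq_le ((le_inv_mul_iff₀ hσ).2 h)

lemma weighted_gap_le_of_descent {θ D e : ℕ → ℝ} {c : ℝ}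
    (hdesc : ∀ i, θ (i + 1) ≤ c * e (i + 1) + D i - D (i + 1))
    (hstep : ∀ i, 1 ≤ i → θ (i + 1) ≤ θ i + c * (e i + e (i + 1))) :
    ∀ K, 1 ≤ K → K * θ K + D K + c * (K * e K) ≤ D 0 + 2 * c * ∑ i ∈ Icc 1 K, (i : ℝ) * e i := by
  intro K hK
  induction K, hK using Nat.le_induction with
  | base =>
    simp only [Icc_self, sum_singleton, Nat.cast_one, one_mul]
    linarith [hdesc 0]
  | succ K hK ih =>
    rw [sum_Icc_succ_top (by omega)]
    have hmul := mul_le_mul_of_nonneg_left (hstep K hK) (Nat.cast_nonneg K : (0 : ℝ) ≤ K)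
    push_cast
    linarith [hdesc K]

variable {m : ℕ} {A : Matrix (Fin n) (Fin n) ℝ →ₗ[ℝ] Vec m}
  {Aadj : Vec m →ₗ[ℝ] Matrix (Fin n) (Fin n) ℝ} {b : Vec m} {C : Matrix (Fin n) (Fin n) ℝ}

lemma objective_ge_of_dual_feasible (hadj : ∀ X ξ, ⟪A X, ξ⟫ = mInner X (Aadj ξ))
    {X Sstar : Matrix (Fin n) (Fin n) ℝ} {ystar : Vec m} (hX : X.PosSemidef)
    (hdual : Aadj ystar + Sstar = C) (hSstar : Sstar.PosSemidef) :
    ⟪b, ystar⟫ - ‖A X - b‖ * ‖ystar‖ ≤ mInner C X := by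
  have hCX : mInner C X = ⟪A X - b, ystar⟫ + ⟪b, ystar⟫ + mInner X Sstar := by
    rw [inner_sub_left, ← hdual, mInner_add_left, mInner_comm (Aadj ystar), mInner_comm Sstar,
      ← hadj]
    ring
  linarith [neg_le_of_abs_le (abs_real_inner_le_norm (A X - b) ystar), hX.mInner_nonneg hSstar]

structure IsIPGMStep (A : Matrix (Fin n) (Fin n) ℝ →ₗ[ℝ] Vec m)
    (Aadj : Vec m →ₗ[ℝ] Matrix (Fin n) (Fin n) ℝ) (b : Vec m) (C Xprev X : Matrix (Fin n) (Fin n) ℝ)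
    (y : Vec m) (S : Matrix (Fin n) (Fin n) ℝ) (σ ε : ℝ) : Prop where
  posSemidef_X : X.PosSemidef
  posSemidef_S : S.PosSemidef
  feas : ‖A X - b‖ ≤ ε
  residual_eq : Aadj y + S - C = (1 / σ) • (X - Xprev)
  complementary : mInner X S = 0

namespace IsIPGMStep

variable {Xprev X S : Matrix (Fin n) (Fin n) ℝ} {y : Vec m} {σ ε M : ℝ}

lemma objective_sub_le (hadj : ∀ X ξ, ⟪A X, ξ⟫ = mInner X (Aadj ξ))
    (h : IsIPGMStep A Aadj b C Xprev X y S σ ε) (hy : ‖y‖ ≤ M) {Z : Matrix (Fin n) (Fin n) ℝ}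
    (hZ : Z.PosSemidef) :
    mInner C X - mInner C Z ≤ mInner (Aadj y + S - C) (Z - X) + M * (ε + ‖A Z - b‖) := by
  have hAy : mInner (Aadj y) (Z - X) = -⟪A X - A Z, y⟫ := by
    rw [mInner_comm, ← hadj, ← inner_neg_left, map_sub, neg_sub]
  have hSX : mInner S X = 0 := by rw [mInner_comm]; exact h.complementary
  have hinner : ⟪A X - A Z, y⟫ ≤ (ε + ‖A Z - b‖) * M :=
    calc ⟪A X - A Z, y⟫ ≤ (‖A X - b‖ + ‖A Z - b‖) * ‖y‖ :=
          real_inner_sub_le_norm_sub_add_norm_sub_mul _ _ b y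
      _ ≤ (ε + ‖A Z - b‖) * ‖y‖ := by gcongr; exact h.feas
      _ ≤ (ε + ‖A Z - b‖) * M := by
        gcongr
        linarith [h.feas, norm_nonneg (A X - b), norm_nonneg (A Z - b)]
  rw [mInner_sub_left, mInner_add_left, hAy, mInner_sub_right S, hSX, mInner_sub_right C]
  linarith [h.posSemidef_S.mInner_nonneg hZ]

lemma objective_gap_le (hadj : ∀ X ξ, ⟪A X, ξ⟫ = mInner X (Aadj ξ))
    (h : IsIPGMStep A Aadj b C Xprev X y S σ ε) (hy : ‖y‖ ≤ M)
    {Xstar : Matrix (Fin n) (Fin n) ℝ} (hXstar : Xstar.PosSemidef) (hAXstar : A Xstar = b)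
    {σprev : ℝ} (hσprev : 0 < σprev) (hσ : σprev ≤ σ) :
    mInner C X - mInner C Xstar ≤
      M * ε + 1 / (2 * σprev) * mNorm (Xprev - Xstar) ^ 2
        - 1 / (2 * σ) * mNorm (X - Xstar) ^ 2 := by
  have hσpos : 0 < σ := hσprev.trans_le hσ
  have key := h.objective_sub_le hadj hy hXstar
  rw [hAXstar, sub_self, norm_zero, add_zero, h.residual_eq, mInner_smul_left] at key
  have hstep : 1 / σ * mInner (X - Xprev) (Xstar - X) ≤
      1 / (2 * σ) * mNorm (Xprev - Xstar) ^ 2 - 1 / (2 * σ) * mNorm (X - Xstar) ^ 2 := by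
    rw [show 1 / σ * mInner (X - Xprev) (Xstar - X) =
        1 / (2 * σ) * (2 * mInner (X - Xprev) (Xstar - X)) by field_simp,
      mInner_three_point, ← mul_sub]
    exact mul_le_mul_of_nonneg_left (by linarith [sq_nonneg (mNorm (X - Xprev))])
      (one_div_pos.2 (by positivity)).le
  have hσ_le : 1 / (2 * σ) * mNorm (Xprev - Xstar) ^ 2 ≤
      1 / (2 * σprev) * mNorm (Xprev - Xstar) ^ 2 := by
    gcongr
  linarith

lemma mul_mNorm_residual_sq_add_objective_le (hadj : ∀ X ξ, ⟪A X, ξ⟫ = mInner X (Aadj ξ))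
    (h : IsIPGMStep A Aadj b C Xprev X y S σ ε) (hy : ‖y‖ ≤ M) (hσ : 0 < σ)
    (hXprev : Xprev.PosSemidef) {εprev : ℝ} (hfeas : ‖A Xprev - b‖ ≤ εprev) :
    σ * mNorm (Aadj y + S - C) ^ 2 + mInner C X ≤ mInner C Xprev + M * (εprev + ε) := by
  have key := h.objective_sub_le hadj hy hXprev
  have hdiff : Xprev - X = (-σ) • (Aadj y + S - C) := by
    rw [h.residual_eq, smul_smul, neg_mul, mul_one_div_cancel hσ.ne', neg_one_smul, neg_sub]
  rw [hdiff, mInner_smul_right, ← mNorm_sq] at key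
  have hM : M * (ε + ‖A Xprev - b‖) ≤ M * (ε + εprev) :=
    mul_le_mul_of_nonneg_left (by linarith) ((norm_nonneg y).trans hy)
  linarith

end IsIPGMStep

end

theorem ipgm_dual_infeasibility_bound_general {n m : ℕ}
    (A : Matrix (Fin n) (Fin n) ℝ →ₗ[ℝ] Vec m)
    (Aadj : Vec m →ₗ[ℝ] Matrix (Fin n) (Fin n) ℝ)
    (hadj : ∀ (X : Matrix (Fin n) (Fin n) ℝ) (ξ : Vec m), ⟪A X, ξ⟫ = mInner X (Aadj ξ))
    (b : Vec m) (C : Matrix (Fin n) (Fin n) ℝ)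
    (X : ℕ → Matrix (Fin n) (Fin n) ℝ) (y : ℕ → Vec m)
    (S : ℕ → Matrix (Fin n) (Fin n) ℝ)
    (σ : ℕ → ℝ) (ε : ℕ → ℝ)
    -- iPGM conditions
    (hXpsd : ∀ k, 1 ≤ k → (X k).PosSemidef)
    (hSpsd : ∀ k, 1 ≤ k → (S k).PosSemidef)
    (hσpos : ∀ k, 0 < σ k) (hσmono : Monotone σ)
    (hεnonneg : ∀ k, 0 ≤ ε k)
    (hfeas : ∀ k, 1 ≤ k → ‖A (X k) - b‖ ≤ ε k)
    (hdual : ∀ k, 1 ≤ k → Aadj (y k) + S k - C = (1 / σ k) • (X k - X (k - 1)))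
    (hcomp : ∀ k, 1 ≤ k → mInner (X k) (S k) = 0)
    -- boundedness of the dual multipliers
    (M : ℝ) (hM : 0 < M) (hy : ∀ k, 1 ≤ k → ‖y k‖ ≤ M)
    -- a primal optimal solution
    (Xstar : Matrix (Fin n) (Fin n) ℝ) (hXstar : Xstar.PosSemidef)
    (hAXstar : A Xstar = b)
    -- a dual feasible pair with zero duality gap
    (ystar : Vec m) (Sstar : Matrix (Fin n) (Fin n) ℝ)
    (hdualfeas : Aadj ystar + Sstar = C) (hSstar : Sstar.PosSemidef)
    (hgap : mInner C Xstar = ⟪b, ystar⟫) :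
    ∀ k, 2 ≤ k →
      mNorm (Aadj (y k) + S k - C) ≤
        (1 / Real.sqrt (σ k)) *
          Real.sqrt ((1 / ((k : ℝ) - 1)) * ((1 / (2 * σ 0)) * mNorm (X 0 - Xstar) ^ 2
              + 2 * M * ∑ i ∈ Finset.Icc 1 (k - 1), (i : ℝ) * ε i)
            + ‖ystar‖ * ε k + M * (ε (k - 1) + ε k)) := by
  intro k hk
  obtain ⟨K, rfl⟩ : ∃ K, k = K + 1 := ⟨k - 1, by omega⟩
  have hK : 1 ≤ K := by omega
  have step (i : ℕ) :
      IsIPGMStep A Aadj b C (X i) (X (i + 1)) (y (i + 1)) (S (i + 1)) (σ (i + 1)) (ε (i + 1)) :=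
    ⟨hXpsd _ (by omega), hSpsd _ (by omega), hfeas _ (by omega), hdual _ (by omega),
      hcomp _ (by omega)⟩
  set θ : ℕ → ℝ := fun i ↦ mInner C (X i) - mInner C Xstar with hθ
  set D : ℕ → ℝ := fun i ↦ 1 / (2 * σ i) * mNorm (X i - Xstar) ^ 2
  have hdesc (i : ℕ) : θ (i + 1) ≤ M * ε (i + 1) + D i - D (i + 1) :=
    (step i).objective_gap_le hadj (hy _ (by omega)) hXstar hAXstar (hσpos i) (hσmono i.le_succ)
  have hres (i : ℕ) (hi : 1 ≤ i) :
      σ (i + 1) * mNorm (Aadj (y (i + 1)) + S (i + 1) - C) ^ 2 + θ (i + 1) ≤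
        θ i + M * (ε i + ε (i + 1)) := by
    have := (step i).mul_mNorm_residual_sq_add_objective_le hadj (hy _ (by omega)) (hσpos _)
      (hXpsd i hi) (hfeas i hi)
    simp only [hθ]
    linarith
  have hmono (i : ℕ) (hi : 1 ≤ i) : θ (i + 1) ≤ θ i + M * (ε i + ε (i + 1)) := by
    have := hσpos (i + 1)
    exact (le_add_of_nonneg_left (by positivity)).trans (hres i hi)
  have hweighted := weighted_gap_le_of_descent hdesc hmono K hK
  have hlow : -(‖ystar‖ * ε (K + 1)) ≤ θ (K + 1) := by
    have hfeasK := mul_le_mul_of_nonneg_right (hfeas (K + 1) (by omega)) (norm_nonneg ystar)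
    have := objective_ge_of_dual_feasible (b := b) hadj (hXpsd (K + 1) (by omega)) hdualfeas hSstar
    simp only [hθ, hgap]
    linarith
  have hθK : θ K ≤ 1 / K * (D 0 + 2 * M * ∑ i ∈ Icc 1 K, (i : ℝ) * ε i) := by
    have hDK : 0 ≤ D K := mul_nonneg (one_div_pos.2 (by linarith [hσpos K])).le (sq_nonneg _)
    have hεK : 0 ≤ M * (K * ε K) := by have := hεnonneg K; positivity
    rw [one_div, ← div_eq_inv_mul, le_div_iff₀ (by positivity)]
    linarith
  simp only [Nat.add_sub_cancel, Nat.cast_add_one, add_sub_cancel_right]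
  refine le_one_div_sqrt_mul_sqrt (hσpos _) ?_
  linarith [hres K hK]

/-- dual infeasibility bound for the inexact projected gradient method. -/
theorem ipgm_dual_infeasibility_bound {n m : ℕ}
    (A : Matrix (Fin n) (Fin n) ℝ →ₗ[ℝ] Vec m)
    (Aadj : Vec m →ₗ[ℝ] Matrix (Fin n) (Fin n) ℝ)
    (hadj : ∀ (X : Matrix (Fin n) (Fin n) ℝ) (ξ : Vec m), ⟪A X, ξ⟫ = mInner X (Aadj ξ))
    (b : Vec m) (C : Matrix (Fin n) (Fin n) ℝ) (hC : C.IsSymm)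
    (X : ℕ → Matrix (Fin n) (Fin n) ℝ) (y : ℕ → Vec m)
    (S : ℕ → Matrix (Fin n) (Fin n) ℝ)
    (σ : ℕ → ℝ) (ε : ℕ → ℝ)
    -- iPGM conditions
    (hX0 : (X 0).PosSemidef)
    (hXpsd : ∀ k, 1 ≤ k → (X k).PosSemidef)
    (hSpsd : ∀ k, 1 ≤ k → (S k).PosSemidef)
    (hσpos : ∀ k, 0 < σ k) (hσmono : Monotone σ)
    (hεnonneg : ∀ k, 0 ≤ ε k)
    (hfeas : ∀ k, 1 ≤ k → ‖A (X k) - b‖ ≤ ε k)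
    (hdual : ∀ k, 1 ≤ k → Aadj (y k) + S k - C = (1 / σ k) • (X k - X (k - 1)))
    (hcomp : ∀ k, 1 ≤ k → mInner (X k) (S k) = 0)
    -- boundedness of the dual multipliers
    (M : ℝ) (hM : 0 < M) (hy : ∀ k, 1 ≤ k → ‖y k‖ ≤ M)
    -- a primal optimal solution
    (Xstar : Matrix (Fin n) (Fin n) ℝ) (hXstar : Xstar.PosSemidef)
    (hAXstar : A Xstar = b)
    (hXstarOpt : ∀ X' : Matrix (Fin n) (Fin n) ℝ, X'.PosSemidef → A X' = b →
      mInner C Xstar ≤ mInner C X')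
    -- a dual feasible pair with zero duality gap
    (ystar : Vec m) (Sstar : Matrix (Fin n) (Fin n) ℝ)
    (hdualfeas : Aadj ystar + Sstar = C) (hSstar : Sstar.PosSemidef)
    (hgap : mInner C Xstar = ⟪b, ystar⟫) :
    ∀ k, 2 ≤ k →
      mNorm (Aadj (y k) + S k - C) ≤
        (1 / Real.sqrt (σ k)) *
          Real.sqrt ((1 / ((k : ℝ) - 1)) * ((1 / (2 * σ 0)) * mNorm (X 0 - Xstar) ^ 2
              + 2 * M * ∑ i ∈ Finset.Icc 1 (k - 1), (i : ℝ) * ε i)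
            + ‖ystar‖ * ε k + M * (ε (k - 1) + ε k)) :=
  ipgm_dual_infeasibility_bound_general A Aadj hadj b C X y S σ ε hXpsd hSpsd hσpos hσmono hεnonneg
    hfeas hdual hcomp M hM hy Xstar hXstar hAXstar ystar Sstar hdualfeas hSstar hgap
end
end

section
/- Fix k ≥ 1 and 0 < σ_{k−1} ≤ σ_k. Let X^{k−1}, X^k, S^k ∈ S^n with X^{k−1} ⪰ 0, X^k ⪰ 0, S^k ⪰ 0, and y^k ∈ R^m satisfy A*y^k + S^k − C = (1/σ_k)(X^k − X^{k−1}) and ⟨X^k, S^k⟩ = 0. Let X* ⪰ 0 with A(X*) = b, and set e^j = X^j − X* and r^j = A(X^j) − b for j ∈ {k−1, k}. Then ⟨C, (k−1)(X^{k−1} − X*) − k(X^k − X*)⟩ ≥ (1/(2σ_k))‖e^k‖² − (1/(2σ_{k−1}))‖e^{k−1}‖² + ⟨y^k, (k−1) r^{k−1} − k r^k⟩. -/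
set_option autoImplicit false

open Matrix Finset Filter
open scoped RealInnerProductSpace

noncomputable section

/-!
Substituting `C = A*y + S - (X^k - X^{k-1}) / σ_k` splits `⟨C, d⟩`, where
`d = (k-1) e^{k-1} - k e^k`, into three parts. The `A*y` part is `⟨y, A d⟩`, the residual term,
because `A X* = b`. By complementarity the `S` part is `(k-1) ⟨X^{k-1}, S⟩ + ⟨X*, S⟩ ≥ 0`, as the
PSD cone is self-dual. For the proximal part, `X^k - X^{k-1} = e^k - e^{k-1}` and
`⟨e - f, (k-1) f - k e⟩ = ‖f‖²/2 - ‖e‖²/2 - (k - 1/2) ‖e - f‖²`; finally `σ_{k-1} ≤ σ_k` lets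
the coefficient of `‖e^{k-1}‖²` grow from `1/(2σ_k)` to `1/(2σ_{k-1})`.
-/

def Matrix.toEuclideanEntries (n : ℕ) :
    Matrix (Fin n) (Fin n) ℝ →ₗ[ℝ] EuclideanSpace ℝ (Fin n × Fin n) where
  toFun X := WithLp.toLp 2 fun p => X p.1 p.2
  map_add' _ _ := rfl
  map_smul' _ _ := rfl

lemma mInner_eq_inner {n : ℕ} (X Y : Matrix (Fin n) (Fin n) ℝ) :
    mInner X Y = ⟪toEuclideanEntries n X, toEuclideanEntries n Y⟫ := by
  simp only [mInner, PiLp.inner_apply, Fintype.sum_prod_type, trace, diag_apply, mul_apply,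
    transpose_apply, RCLike.inner_apply, conj_trivial, mul_comm]
  exact Finset.sum_comm

lemma mNorm_eq_norm {n : ℕ} (X : Matrix (Fin n) (Fin n) ℝ) :
    mNorm X = ‖toEuclideanEntries n X‖ := by
  rw [mNorm, mInner_eq_inner, real_inner_self_eq_norm_sq, Real.sqrt_sq (norm_nonneg _)]

open scoped ComplexOrder in
lemma Matrix.PosSemidef.trace_mul_nonneg {ι 𝕜 : Type*} [Fintype ι] [RCLike 𝕜]
    {A B : Matrix ι ι 𝕜} (hA : A.PosSemidef) (hB : B.PosSemidef) : 0 ≤ (A * B).trace := by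
  classical
  open scoped MatrixOrder in
  obtain ⟨C, rfl⟩ := CStarAlgebra.nonneg_iff_eq_star_mul_self.mp hA.nonneg
  rw [star_eq_conjTranspose, Matrix.mul_assoc, Matrix.trace_mul_comm]
  exact (hB.mul_mul_conjTranspose_same C).trace_nonneg

lemma mInner_nonneg_of_posSemidef {n : ℕ} {X Y : Matrix (Fin n) (Fin n) ℝ}
    (hX : X.PosSemidef) (hY : Y.PosSemidef) : 0 ≤ mInner X Y := by
  rw [mInner, ← conjTranspose_eq_transpose_of_trivial, hX.isHermitian.eq]
  exact hX.trace_mul_nonneg hY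

section InnerProductSpace

variable {E : Type*} [NormedAddCommGroup E] [InnerProductSpace ℝ E]

lemma inner_sub_smul_sub_le (x xprev z : E) {k : ℝ} (hk : 1 / 2 ≤ k) :
    ⟪x - xprev, (k - 1) • (xprev - z) - k • (x - z)⟫ ≤ ‖xprev - z‖ ^ 2 / 2 - ‖x - z‖ ^ 2 / 2 := by
  set u := x - z
  set v := xprev - z
  have hx : x - xprev = u - v := by simp only [u, v, sub_sub_sub_cancel_right]
  clear_value u v
  have identity : ⟪u - v, (k - 1) • v - k • u⟫
      = ‖v‖ ^ 2 / 2 - ‖u‖ ^ 2 / 2 - (k - 1 / 2) * ‖u - v‖ ^ 2 := by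
    rw [norm_sub_sq_real]
    simp only [inner_sub_left, inner_sub_right, inner_smul_right, real_inner_self_eq_norm_sq,
      real_inner_comm u v]
    ring
  rw [hx, identity]
  nlinarith [sq_nonneg ‖u - v‖]

theorem ipgm_step_inequality {a c s x xprev z : E} {k σ σprev : ℝ} (hk : 1 ≤ k)
    (hσprev : 0 < σprev) (hσ : σprev ≤ σ) (hc : a + s - c = (1 / σ) • (x - xprev))
    (hxs : ⟪x, s⟫ = 0) (hxprev : 0 ≤ ⟪xprev, s⟫) (hz : 0 ≤ ⟪z, s⟫) :
    1 / (2 * σ) * ‖x - z‖ ^ 2 - 1 / (2 * σprev) * ‖xprev - z‖ ^ 2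
        + ⟪a, (k - 1) • (xprev - z) - k • (x - z)⟫
      ≤ ⟪c, (k - 1) • (xprev - z) - k • (x - z)⟫ := by
  set d := (k - 1) • (xprev - z) - k • (x - z)
  have hcd : ⟪c, d⟫ = ⟪a, d⟫ + ⟪s, d⟫ - 1 / σ * ⟪x - xprev, d⟫ := by
    rw [show c = a + s - (1 / σ) • (x - xprev) by rw [← hc]; abel]
    simp only [inner_add_left, inner_sub_left, inner_smul_left, RCLike.conj_to_real]
  have hsd : 0 ≤ ⟪s, d⟫ := by
    simp only [d, inner_sub_right, inner_smul_right, real_inner_comm x s, real_inner_comm xprev s,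
      real_inner_comm z s, hxs]
    nlinarith
  have hquad := inner_sub_smul_sub_le x xprev z (k := k) (by linarith)
  have hstep : 1 / (2 * σ) * ‖xprev - z‖ ^ 2 ≤ 1 / (2 * σprev) * ‖xprev - z‖ ^ 2 := by
    gcongr
  have hσ₀ : 0 < σ := hσprev.trans_le hσ
  have hscale : 1 / σ * ⟪x - xprev, d⟫ ≤ 1 / σ * (‖xprev - z‖ ^ 2 / 2 - ‖x - z‖ ^ 2 / 2) := by
    gcongr
  rw [hcd]
  have hhalf : 1 / σ * (‖xprev - z‖ ^ 2 / 2 - ‖x - z‖ ^ 2 / 2)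
      = 1 / (2 * σ) * ‖xprev - z‖ ^ 2 - 1 / (2 * σ) * ‖x - z‖ ^ 2 := by ring
  linarith

end InnerProductSpace

theorem ipgm_telescoping_inequality_general {n m : ℕ}
    (A : Matrix (Fin n) (Fin n) ℝ →ₗ[ℝ] Vec m)
    (Aadj : Vec m →ₗ[ℝ] Matrix (Fin n) (Fin n) ℝ)
    (hadj : ∀ (X : Matrix (Fin n) (Fin n) ℝ) (ξ : Vec m), ⟪A X, ξ⟫ = mInner X (Aadj ξ))
    (b : Vec m) (C : Matrix (Fin n) (Fin n) ℝ)
    (k : ℕ) (hk : 1 ≤ k)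
    (σkm1 σk : ℝ) (hσkm1 : 0 < σkm1) (hσle : σkm1 ≤ σk)
    (Xkm1 Xk Sk : Matrix (Fin n) (Fin n) ℝ)
    (hXkm1 : Xkm1.PosSemidef) (hSk : Sk.PosSemidef)
    (yk : Vec m)
    (heq : Aadj yk + Sk - C = (1 / σk) • (Xk - Xkm1))
    (hcomp : mInner Xk Sk = 0)
    (Xstar : Matrix (Fin n) (Fin n) ℝ) (hXstar : Xstar.PosSemidef)
    (hAXstar : A Xstar = b) :
    mInner C (((k : ℝ) - 1) • (Xkm1 - Xstar) - (k : ℝ) • (Xk - Xstar)) ≥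
      (1 / (2 * σk)) * mNorm (Xk - Xstar) ^ 2
        - (1 / (2 * σkm1)) * mNorm (Xkm1 - Xstar) ^ 2
        + ⟪yk, ((k : ℝ) - 1) • (A Xkm1 - b) - (k : ℝ) • (A Xk - b)⟫ := by
  set T := toEuclideanEntries n
  have hA : ((k : ℝ) - 1) • (A Xkm1 - b) - (k : ℝ) • (A Xk - b)
      = A (((k : ℝ) - 1) • (Xkm1 - Xstar) - (k : ℝ) • (Xk - Xstar)) := by
    simp only [map_sub, map_smul, hAXstar]
  have hT : T (Aadj yk) + T Sk - T C = (1 / σk) • (T Xk - T Xkm1) := by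
    simpa only [map_add, map_sub, map_smul] using congrArg T heq
  rw [hA, real_inner_comm, hadj]
  simp only [mInner_eq_inner, mNorm_eq_norm, map_sub, map_smul] at hcomp ⊢
  rw [real_inner_comm (T (Aadj yk))]
  exact ipgm_step_inequality (by exact_mod_cast hk) hσkm1 hσle hT hcomp
    (by simpa only [mInner_eq_inner] using mInner_nonneg_of_posSemidef hXkm1 hSk)
    (by simpa only [mInner_eq_inner] using mInner_nonneg_of_posSemidef hXstar hSk)

/-- the telescoping inequality (eq. `thm-iPGM-3` in the paper) for one iPGM step. -/
theorem ipgm_telescoping_inequality {n m : ℕ}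
    (A : Matrix (Fin n) (Fin n) ℝ →ₗ[ℝ] Vec m)
    (Aadj : Vec m →ₗ[ℝ] Matrix (Fin n) (Fin n) ℝ)
    (hadj : ∀ (X : Matrix (Fin n) (Fin n) ℝ) (ξ : Vec m), ⟪A X, ξ⟫ = mInner X (Aadj ξ))
    (b : Vec m) (C : Matrix (Fin n) (Fin n) ℝ) (hC : C.IsSymm)
    (k : ℕ) (hk : 1 ≤ k)
    (σkm1 σk : ℝ) (hσkm1 : 0 < σkm1) (hσle : σkm1 ≤ σk)
    (Xkm1 Xk Sk : Matrix (Fin n) (Fin n) ℝ)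
    (hXkm1 : Xkm1.PosSemidef) (hXk : Xk.PosSemidef) (hSk : Sk.PosSemidef)
    (yk : Vec m)
    (heq : Aadj yk + Sk - C = (1 / σk) • (Xk - Xkm1))
    (hcomp : mInner Xk Sk = 0)
    (Xstar : Matrix (Fin n) (Fin n) ℝ) (hXstar : Xstar.PosSemidef)
    (hAXstar : A Xstar = b) :
    mInner C (((k : ℝ) - 1) • (Xkm1 - Xstar) - (k : ℝ) • (Xk - Xstar)) ≥
      (1 / (2 * σk)) * mNorm (Xk - Xstar) ^ 2
        - (1 / (2 * σkm1)) * mNorm (Xkm1 - Xstar) ^ 2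
        + ⟪yk, ((k : ℝ) - 1) • (A Xkm1 - b) - (k : ℝ) • (A Xk - b)⟫ :=
  ipgm_telescoping_inequality_general A Aadj hadj b C k hk σkm1 σk hσkm1 hσle Xkm1 Xk Sk hXkm1 hSk
    yk heq hcomp Xstar hXstar hAXstar
end
end

section
/- Let A : S^n → R^m be a linear map with adjoint A*, b ∈ R^m, Z ∈ S^n, and F_P = {X ∈ S^n : A(X) = b, X ⪰ 0}. Suppose ξ ∈ R^m satisfies A( Π_{S^n_+}(A*ξ + Z) ) = b. Then X := Π_{S^n_+}(A*ξ + Z) is the unique minimizer of ‖X' − Z‖ over X' ∈ F_P, i.e., X is the projection of Z onto F_P in the Frobenius norm. -/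
set_option autoImplicit false

open Matrix Finset Filter
open scoped RealInnerProductSpace

noncomputable section

/-- `P` is the (unique) nearest positive semidefinite matrix to `Z` in the Frobenius norm,
i.e. the projection of `Z` onto the PSD cone. -/
def IsProjPSD {n : ℕ} (Z P : Matrix (Fin n) (Fin n) ℝ) : Prop :=
  P.PosSemidef ∧
    ∀ Y : Matrix (Fin n) (Fin n) ℝ, Y.PosSemidef → mNorm (P - Z) ≤ mNorm (Y - Z)

/-!
`X = Π(W)` with `W = A*ξ + Z` is the nearest PSD matrix to `W`, so `⟨W - X, Y - X⟩ ≤ 0` for every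
PSD `Y`. If moreover `A Y = b = A X`, then `⟨Y - X, A*ξ⟩ = ⟨A Y - A X, ξ⟩ = 0`, hence
`⟨Y - X, X - Z⟩ ≥ 0` and `‖Y - Z‖² ≥ ‖X - Z‖² + ‖Y - X‖²`. The Frobenius geometry is that of
`ℝ^(n × n)`, where the projection inequality is available.
-/

section InnerProductSpace

variable {F : Type*} [NormedAddCommGroup F] [InnerProductSpace ℝ F]

theorem real_inner_sub_sub_nonpos_of_forall_norm_sub_le {K : Set F} (hK : Convex ℝ K) {u v : F}
    (hv : v ∈ K) (hmin : ∀ w ∈ K, ‖u - v‖ ≤ ‖u - w‖) : ∀ w ∈ K, ⟪u - v, w - v⟫ ≤ 0 := by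
  have : Nonempty K := ⟨⟨v, hv⟩⟩
  refine (norm_eq_iInf_iff_real_inner_le_zero hK hv).mp (le_antisymm ?_ ?_)
  · exact le_ciInf fun w : K => hmin w w.2
  · exact ciInf_le (f := fun w : K => ‖u - w‖)
      ⟨0, Set.forall_mem_range.mpr fun _ => norm_nonneg _⟩ ⟨v, hv⟩

theorem norm_sub_sq_add_norm_sub_sq_le {K : Set F} (hK : Convex ℝ K) {u v w z : F} (hv : v ∈ K)
    (hmin : ∀ w ∈ K, ‖u - v‖ ≤ ‖u - w‖) (hw : w ∈ K) (horth : ⟪w - v, u - z⟫ = 0) :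
    ‖v - z‖ ^ 2 + ‖w - v‖ ^ 2 ≤ ‖w - z‖ ^ 2 := by
  have hobtuse := real_inner_sub_sub_nonpos_of_forall_norm_sub_le hK hv hmin w hw
  have hcross : 0 ≤ ⟪w - v, v - z⟫ := by
    have : v - z = (u - z) - (u - v) := by abel
    rw [this, inner_sub_right, horth, real_inner_comm]
    linarith
  have hsplit : w - z = (w - v) + (v - z) := by abel
  rw [hsplit, norm_add_sq_real]
  linarith

theorem norm_sub_le_and_lt_of_inner_eq_zero {K : Set F} (hK : Convex ℝ K) {u v w z : F}
    (hv : v ∈ K) (hmin : ∀ w ∈ K, ‖u - v‖ ≤ ‖u - w‖) (hw : w ∈ K)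
    (horth : ⟪w - v, u - z⟫ = 0) :
    ‖v - z‖ ≤ ‖w - z‖ ∧ (w ≠ v → ‖v - z‖ < ‖w - z‖) := by
  have hpyth := norm_sub_sq_add_norm_sub_sq_le hK hv hmin hw horth
  refine ⟨(sq_le_sq₀ (norm_nonneg _) (norm_nonneg _)).mp ?_, fun hne => ?_⟩
  · nlinarith [sq_nonneg ‖w - v‖]
  · have : 0 < ‖w - v‖ := norm_pos_iff.mpr (sub_ne_zero.mpr hne)
    exact (sq_lt_sq₀ (norm_nonneg _) (norm_nonneg _)).mp (by nlinarith)

end InnerProductSpace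

theorem convex_setOf_posSemidef (n : Type*) [Fintype n] :
    Convex ℝ {X : Matrix n n ℝ | X.PosSemidef} :=
  fun _ hX _ hY _ _ ha hb _ => (hX.smul ha).add (hY.smul hb)

def matrixToEuclidean (n : ℕ) :
    Matrix (Fin n) (Fin n) ℝ →ₗ[ℝ] EuclideanSpace ℝ (Fin n × Fin n) where
  toFun X := WithLp.toLp 2 fun p => X p.1 p.2
  map_add' _ _ := rfl
  map_smul' _ _ := rfl

theorem matrixToEuclidean_apply {n : ℕ} (X : Matrix (Fin n) (Fin n) ℝ) (i j : Fin n) :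
    matrixToEuclidean n X (i, j) = X i j :=
  rfl

theorem mInner_eq_inner_matrixToEuclidean {n : ℕ} (X Y : Matrix (Fin n) (Fin n) ℝ) :
    mInner X Y = ⟪matrixToEuclidean n X, matrixToEuclidean n Y⟫ := by
  simp only [mInner, matrixToEuclidean_apply, Matrix.trace, Matrix.diag, Matrix.mul_apply,
    Matrix.transpose_apply, PiLp.inner_apply, Fintype.sum_prod_type, RCLike.inner_apply,
    conj_trivial]
  rw [Finset.sum_comm]
  simp only [mul_comm]

theorem mNorm_eq_norm_matrixToEuclidean {n : ℕ} (X : Matrix (Fin n) (Fin n) ℝ) :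
    mNorm X = ‖matrixToEuclidean n X‖ := by
  rw [mNorm, mInner_eq_inner_matrixToEuclidean, real_inner_self_eq_norm_sq,
    Real.sqrt_sq (norm_nonneg _)]

theorem matrixToEuclidean_injective (n : ℕ) : Function.Injective (matrixToEuclidean n) :=
  fun _ _ h => Matrix.ext fun i j => congrArg (· (i, j)) h

theorem projection_onto_spectrahedron_general {n m : ℕ}
    (A : Matrix (Fin n) (Fin n) ℝ →ₗ[ℝ] Vec m)
    (Aadj : Vec m →ₗ[ℝ] Matrix (Fin n) (Fin n) ℝ)
    (hadj : ∀ (X : Matrix (Fin n) (Fin n) ℝ) (ξ : Vec m), ⟪A X, ξ⟫ = mInner X (Aadj ξ))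
    (b : Vec m) (Z : Matrix (Fin n) (Fin n) ℝ)
    (proj : Matrix (Fin n) (Fin n) ℝ → Matrix (Fin n) (Fin n) ℝ)
    (hproj : ∀ Y : Matrix (Fin n) (Fin n) ℝ, IsProjPSD Y (proj Y))
    (ξ : Vec m) (hfeas : A (proj (Aadj ξ + Z)) = b) :
    (A (proj (Aadj ξ + Z)) = b ∧ (proj (Aadj ξ + Z)).PosSemidef) ∧
    ∀ X' : Matrix (Fin n) (Fin n) ℝ, A X' = b → X'.PosSemidef →
      mNorm (proj (Aadj ξ + Z) - Z) ≤ mNorm (X' - Z) ∧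
      (X' ≠ proj (Aadj ξ + Z) → mNorm (proj (Aadj ξ + Z) - Z) < mNorm (X' - Z)) := by
  obtain ⟨hXpsd, hXmin⟩ := hproj (Aadj ξ + Z)
  set X := proj (Aadj ξ + Z)
  refine ⟨⟨hfeas, hXpsd⟩, fun X' hX'b hX'psd => ?_⟩
  set e := matrixToEuclidean n
  have hnearest :
      ∀ w ∈ e '' {Y | Y.PosSemidef}, ‖e (Aadj ξ + Z) - e X‖ ≤ ‖e (Aadj ξ + Z) - w‖ := by
    rintro _ ⟨Y, hY, rfl⟩
    have hXY := hXmin Y hY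
    rwa [mNorm_eq_norm_matrixToEuclidean, mNorm_eq_norm_matrixToEuclidean, map_sub, map_sub,
      norm_sub_rev, norm_sub_rev (e Y)] at hXY
  have horth : ⟪e X' - e X, e (Aadj ξ + Z) - e Z⟫ = 0 := by
    rw [← map_sub, ← map_sub, add_sub_cancel_right, ← mInner_eq_inner_matrixToEuclidean, ← hadj,
      map_sub, hX'b, hfeas, sub_self, inner_zero_left]
  obtain ⟨hle, hlt⟩ := norm_sub_le_and_lt_of_inner_eq_zero
    ((convex_setOf_posSemidef _).linear_image e) ⟨X, hXpsd, rfl⟩ hnearest ⟨X', hX'psd, rfl⟩ horth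
  simp only [mNorm_eq_norm_matrixToEuclidean, map_sub]
  exact ⟨hle, fun hne => hlt ((matrixToEuclidean_injective n).ne hne)⟩

/-- if `A(Π_{S^n_+}(A*ξ + Z)) = b`, then `X = Π_{S^n_+}(A*ξ + Z)` is the
unique nearest point to `Z` in the spectrahedron `F_P = {X : A X = b, X ⪰ 0}`. -/
theorem projection_onto_spectrahedron {n m : ℕ}
    (A : Matrix (Fin n) (Fin n) ℝ →ₗ[ℝ] Vec m)
    (Aadj : Vec m →ₗ[ℝ] Matrix (Fin n) (Fin n) ℝ)
    (hadj : ∀ (X : Matrix (Fin n) (Fin n) ℝ) (ξ : Vec m), ⟪A X, ξ⟫ = mInner X (Aadj ξ))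
    (hAadjSymm : ∀ ξ : Vec m, (Aadj ξ).IsSymm)
    (b : Vec m) (Z : Matrix (Fin n) (Fin n) ℝ) (hZ : Z.IsSymm)
    (proj : Matrix (Fin n) (Fin n) ℝ → Matrix (Fin n) (Fin n) ℝ)
    (hproj : ∀ Y : Matrix (Fin n) (Fin n) ℝ, IsProjPSD Y (proj Y))
    (ξ : Vec m) (hfeas : A (proj (Aadj ξ + Z)) = b) :
    (A (proj (Aadj ξ + Z)) = b ∧ (proj (Aadj ξ + Z)).PosSemidef) ∧
    ∀ X' : Matrix (Fin n) (Fin n) ℝ, A X' = b → X'.PosSemidef →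
      mNorm (proj (Aadj ξ + Z) - Z) ≤ mNorm (X' - Z) ∧
      (X' ≠ proj (Aadj ξ + Z) → mNorm (proj (Aadj ξ + Z) - Z) < mNorm (X' - Z)) :=
  projection_onto_spectrahedron_general A Aadj hadj b Z proj hproj ξ hfeas
end
end
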